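/- arXiv:1601.00247 — 2 statements merged into one kernel-verified Lean document; each statement's English description precedes it below -/
import Mathlib

section
/- Let F be a field and Λ a Lagrangian subspace of F^n × F^n containing c₀ = ((1,…,1),(0,…,0)). Then there exist an integer k ≤ n(n−1)/2 + 1 and matrices A_1, …, A_k, each of which is one of the generators Ξ_j(t) or Ξ_{i,j}(t) (for some indices and some t ∈ F), such that Λ = A_1 ⋯ A_k · (F^n × {0}). (Electrically: every boundary behavior of an n-boundary-vertex network is the boundary behavior of a layerable network with at most n(n−1)/2 + 1 edges.) -/
open Module

/-- The generator `Ξ_j(t) = [[I, t E_{j,j}], [0, I]]` of the electrical linear group,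
corresponding to adjoining a boundary spike at vertex `j`. -/
def XiD {F : Type*} [Field F] {n : ℕ} (j : Fin n) (t : F) :
    Matrix (Fin n ⊕ Fin n) (Fin n ⊕ Fin n) F :=
  Matrix.fromBlocks 1 (Matrix.single j j t) 0 1

/-- The generator `Ξ_{i,j}(t) = [[I, 0], [t(E_{i,i} − E_{i,j} − E_{j,i} + E_{j,j}), I]]`
of the electrical linear group, corresponding to adjoining a boundary edge from `i` to `j`. -/
def XiOff {F : Type*} [Field F] {n : ℕ} (i j : Fin n) (t : F) :
    Matrix (Fin n ⊕ Fin n) (Fin n ⊕ Fin n) F :=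
  Matrix.fromBlocks 1 0
    (t • (Matrix.single i i (1 : F) - Matrix.single i j 1
      - Matrix.single j i 1 + Matrix.single j j 1)) 1

/-- The generating set of the electrical linear group inside `GL_{2n}(F)`. -/
def ELGen (F : Type*) [Field F] (n : ℕ) :
    Set ((Matrix (Fin n ⊕ Fin n) (Fin n ⊕ Fin n) F)ˣ) :=
  {A | (∃ j t, (A : Matrix (Fin n ⊕ Fin n) (Fin n ⊕ Fin n) F) = XiD j t) ∨
       (∃ i j t, i ≠ j ∧ (A : Matrix (Fin n ⊕ Fin n) (Fin n ⊕ Fin n) F) = XiOff i j t)}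

/-- The electrical linear group `EL_n(F)`: the subgroup of `GL_{2n}(F)` generated by all
the matrices `Ξ_j(t)` and `Ξ_{i,j}(t)`. -/
def EL (F : Type*) [Field F] (n : ℕ) :
    Subgroup ((Matrix (Fin n ⊕ Fin n) (Fin n ⊕ Fin n) F)ˣ) :=
  Subgroup.closure (ELGen F n)

/-!
Let `K = {w | (0, w) ∈ Λ}` and choose coordinates `J` such that restriction to `J` is an
isomorphism `K ≅ F^J`. Isotropy makes the first component of the shear
`(x₁, x₂) ↦ (x₁ + Q_J x₂, x₂)`, `Q_J` the diagonal projection onto `J`, injective on `Λ`, so the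
shear maps `Λ` onto the graph `{(x, T x)}` of a matrix `T`; `T` is symmetric by isotropy, kills
`(1, …, 1)` because `c₀ ∈ Λ`, and `T a b = 0` for distinct `a, b ∈ J`. Hence
`Λ = [[I, -Q_J], [0, I]] · [[I, 0], [T, I]] · (F^n × 0)`, where the first factor is
`∏_{j ∈ J} Ξ_j(-1)` and the second is `∏ Ξ_{a,b}(-T a b)` over the pairs `a < b` not both in `J`.
As `|J| ≤ C(|J|, 2) + 1`, at most `C(n, 2) + 1` factors occur.
-/

open Matrix Finset

section BlockShears

variable {R ι α : Type*} [CommRing R] [Fintype ι] [DecidableEq ι]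

lemma fromBlocks_upper_mulVec (S : Matrix ι ι R) (x : ι ⊕ ι → R) :
    fromBlocks 1 S 0 1 *ᵥ x = Sum.elim (x ∘ Sum.inl + S *ᵥ (x ∘ Sum.inr)) (x ∘ Sum.inr) := by
  simp [fromBlocks_mulVec]

lemma fromBlocks_lower_mulVec (T : Matrix ι ι R) (x : ι ⊕ ι → R) :
    fromBlocks 1 0 T 1 *ᵥ x = Sum.elim (x ∘ Sum.inl) (T *ᵥ (x ∘ Sum.inl) + x ∘ Sum.inr) := by
  simp [fromBlocks_mulVec]

lemma fromBlocks_upper_neg_mul_self (S : Matrix ι ι R) :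
    (fromBlocks 1 (-S) 0 1 : Matrix (ι ⊕ ι) (ι ⊕ ι) R) * fromBlocks 1 S 0 1 = 1 := by
  simp [fromBlocks_multiply, fromBlocks_one]

lemma prod_toList_map_fromBlocks_upper (s : Finset α) (f : α → Matrix ι ι R) :
    (s.toList.map fun a => (fromBlocks 1 (f a) 0 1 : Matrix (ι ⊕ ι) (ι ⊕ ι) R)).prod
      = fromBlocks 1 (∑ a ∈ s, f a) 0 1 := by
  rw [← sum_map_toList]
  induction s.toList with
  | nil => simp [fromBlocks_one]
  | cons a l ih => simp [ih, fromBlocks_multiply, add_comm]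

lemma prod_toList_map_fromBlocks_lower (s : Finset α) (f : α → Matrix ι ι R) :
    (s.toList.map fun a => (fromBlocks 1 0 (f a) 1 : Matrix (ι ⊕ ι) (ι ⊕ ι) R)).prod
      = fromBlocks 1 0 (∑ a ∈ s, f a) 1 := by
  rw [← sum_map_toList]
  induction s.toList with
  | nil => simp [fromBlocks_one]
  | cons a l ih => simp [ih, fromBlocks_multiply, add_comm]

end BlockShears

lemma sum_filter_lt_add_swap {ι M : Type*} [Fintype ι] [LinearOrder ι] [AddCommMonoid M]
    (f : ι × ι → M) (hf : ∀ i, f (i, i) = 0) :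
    ∑ p : ι × ι with p.1 < p.2, (f p + f p.swap) = ∑ p, f p := by
  have hswap : ∑ p : ι × ι with p.1 < p.2, f p.swap = ∑ p : ι × ι with p.2 < p.1, f p :=
    sum_equiv (Equiv.prodComm ι ι) (by simp) (by simp)
  have hdiag : ∑ p : ι × ι with ¬p.1 < p.2, f p = ∑ p : ι × ι with p.2 < p.1, f p := by
    rw [← sum_filter_of_ne (p := fun p : ι × ι => p.2 < p.1), filter_filter]
    · congr 1
      ext p
      simp only [mem_filter, mem_univ, true_and, not_lt]
      exact ⟨fun h => h.2, fun h => ⟨h.le, h⟩⟩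
    · rintro ⟨i, j⟩ hij hne
      simp only [mem_filter, mem_univ, true_and, not_lt] at hij ⊢
      exact hij.lt_of_ne fun h => hne (h ▸ hf i)
  rw [sum_add_distrib, hswap, ← hdiag, sum_filter_add_sum_filter_not]

section EdgeLaplacian

variable {R ι : Type*} [CommRing R] [Fintype ι] [DecidableEq ι] [LinearOrder ι]

def edgeLaplacian (i j : ι) : Matrix ι ι R :=
  single i i 1 - single i j 1 - single j i 1 + single j j 1

lemma sum_smul_edgeLaplacian (T : Matrix ι ι R) (hT : T.IsSymm) (hrow : T *ᵥ 1 = 0) :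
    ∑ p : ι × ι with p.1 < p.2, (-T p.1 p.2) • edgeLaplacian p.1 p.2 = T := by
  let f : ι × ι → Matrix ι ι R := fun p => T p.1 p.2 • (single p.1 p.2 1 - single p.1 p.1 1)
  have hterm : ∀ p : ι × ι, (-T p.1 p.2) • edgeLaplacian p.1 p.2 = f p + f p.swap := by
    rintro ⟨i, j⟩
    simp only [f, edgeLaplacian, Prod.swap, hT.apply i j]
    module
  have hrow' : ∀ i, ∑ j, T i j = 0 := fun i => by
    simpa [mulVec, dotProduct] using congrFun hrow i
  simp_rw [hterm]
  rw [sum_filter_lt_add_swap f (by simp [f]), Fintype.sum_prod_type]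
  simp only [f, smul_sub, sum_sub_distrib, ← sum_smul, hrow', zero_smul, sub_zero]
  simp only [smul_single, smul_eq_mul, mul_one]
  exact (matrix_eq_sum_single T).symm

lemma sum_filter_lt_not_both_mem_smul_edgeLaplacian (T : Matrix ι ι R) (hT : T.IsSymm)
    (hrow : T *ᵥ 1 = 0) (J : Finset ι) (hTJ : ∀ a ∈ J, ∀ b ∈ J, a ≠ b → T a b = 0) :
    ∑ p : ι × ι with p.1 < p.2 ∧ ¬(p.1 ∈ J ∧ p.2 ∈ J), (-T p.1 p.2) • edgeLaplacian p.1 p.2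
      = T := by
  rw [← filter_filter, sum_filter_of_ne, sum_smul_edgeLaplacian T hT hrow]
  intro p hp hne hJ
  simp only [mem_filter, mem_univ, true_and] at hp
  exact hne (by rw [hTJ _ hJ.1 _ hJ.2 hp.ne, neg_zero, zero_smul])

end EdgeLaplacian

lemma Nat.le_choose_two_add_one (k : ℕ) : k ≤ k.choose 2 + 1 := by
  cases k with
  | zero => simp
  | succ m => rw [Nat.choose_succ_succ', Nat.choose_one_right]; omega

lemma card_add_card_filter_lt_not_both_mem_le {ι : Type*} [Fintype ι] [LinearOrder ι]
    (J : Finset ι) :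
    #J + #{p : ι × ι | p.1 < p.2 ∧ ¬(p.1 ∈ J ∧ p.2 ∈ J)} ≤ (Fintype.card ι).choose 2 + 1 := by
  have hsplit : #{p : ι × ι | p.1 < p.2 ∧ ¬(p.1 ∈ J ∧ p.2 ∈ J)} + (#J).choose 2
      = (Fintype.card ι).choose 2 := by
    rw [← card_product_filter_lt, ← Fintype.card_product_filter_lt, ← card_union_of_disjoint]
    · congr 1
      ext p
      simp only [mem_union, mem_filter, mem_univ, true_and, mem_product]
      tauto
    · rw [disjoint_left]
      simp +contextual
  have := Nat.le_choose_two_add_one #J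
  omega

section Symplectic

variable {R ι : Type*} [CommRing R] [Fintype ι]

def symplecticForm (x y : ι ⊕ ι → R) : R :=
  (x ∘ Sum.inr) ⬝ᵥ (y ∘ Sum.inl) - (x ∘ Sum.inl) ⬝ᵥ (y ∘ Sum.inr)

def IsIsotropic (Λ : Submodule R (ι ⊕ ι → R)) : Prop :=
  ∀ x ∈ Λ, ∀ y ∈ Λ, symplecticForm x y = 0

def matrixGraph (T : Matrix ι ι R) : Submodule R (ι ⊕ ι → R) :=
  LinearMap.ker (LinearMap.funLeft R R Sum.inr - T.mulVecLin ∘ₗ LinearMap.funLeft R R Sum.inl)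

lemma mem_matrixGraph {T : Matrix ι ι R} {y : ι ⊕ ι → R} :
    y ∈ matrixGraph T ↔ y ∘ Sum.inr = T *ᵥ (y ∘ Sum.inl) := by
  simp [matrixGraph, sub_eq_zero, LinearMap.funLeft]

variable [DecidableEq ι]

lemma symplecticForm_fromBlocks_upper_mulVec {S : Matrix ι ι R} (hS : S.IsSymm)
    (x y : ι ⊕ ι → R) :
    symplecticForm (fromBlocks 1 S 0 1 *ᵥ x) (fromBlocks 1 S 0 1 *ᵥ y) = symplecticForm x y := by
  simp only [symplecticForm, fromBlocks_upper_mulVec, Sum.elim_comp_inl, Sum.elim_comp_inr,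
    dotProduct_add, add_dotProduct]
  rw [dotProduct_mulVec, ← vecMul_transpose, hS.eq]
  ring

lemma matrixGraph_eq_map_fromBlocks (T : Matrix ι ι R) :
    matrixGraph T = (LinearMap.ker (LinearMap.funLeft R R Sum.inr)).map
      (fromBlocks 1 0 T 1 : Matrix (ι ⊕ ι) (ι ⊕ ι) R).mulVecLin := by
  ext y
  simp only [mem_matrixGraph, Submodule.mem_map, LinearMap.mem_ker, mulVecLin_apply,
    fromBlocks_lower_mulVec]
  constructor
  · intro hy
    refine ⟨Sum.elim (y ∘ Sum.inl) 0, rfl, ?_⟩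
    simp [← hy]
  · rintro ⟨x, hx, rfl⟩
    simp only [LinearMap.funLeft, LinearMap.coe_mk, AddHom.coe_mk] at hx
    simp [hx]

lemma IsIsotropic.isSymm_of_matrixGraph {T : Matrix ι ι R} (h : IsIsotropic (matrixGraph T)) :
    T.IsSymm := by
  have hmem : ∀ a, Sum.elim (Pi.single a 1) (T *ᵥ Pi.single a 1) ∈ matrixGraph T := fun a => by
    simp [mem_matrixGraph]
  refine IsSymm.ext fun a b => ?_
  simpa [symplecticForm, dotProduct_single, single_dotProduct, sub_eq_zero] using
    h _ (hmem a) _ (hmem b)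

end Symplectic

section FieldCoords

variable {F ι : Type*} [Field F] [Fintype ι]

lemma exists_finset_bijective_funLeft_comp {V : Type*} [AddCommGroup V] [Module F V]
    [FiniteDimensional F V] (f : V →ₗ[F] ι → F) (hf : Function.Injective f) :
    ∃ J : Finset ι, Function.Bijective (LinearMap.funLeft F F ((↑) : J → ι) ∘ₗ f) := by
  classical
  -- `J` indexes a basis of `Dual F V` extracted from the coordinate functionals `w ↦ f w j`.
  let ev : ι → Module.Dual F V := fun j => LinearMap.proj j ∘ₗ f
  obtain ⟨b, -, -, hspan, hli⟩ :=
    exists_linearIndepOn_extension (linearIndepOn_empty F ev) (Set.empty_subset Set.univ)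
  refine ⟨b.toFinset, ?_⟩
  have hinj : Function.Injective (LinearMap.funLeft F F ((↑) : b.toFinset → ι) ∘ₗ f) := by
    rw [← LinearMap.ker_eq_bot, LinearMap.ker_eq_bot']
    intro w hw
    have hle : Submodule.span F (ev '' b) ≤ LinearMap.ker (Module.Dual.eval F V w) := by
      rw [Submodule.span_le]
      rintro _ ⟨j, hj, rfl⟩
      exact congrFun hw ⟨j, by simpa using hj⟩
    exact hf ((funext fun j => hle (hspan ⟨j, Set.mem_univ j, rfl⟩)).trans (map_zero f).symm)
  refine ⟨hinj, (LinearMap.injective_iff_surjective_of_finrank_eq_finrank ?_).mp hinj⟩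
  refine le_antisymm (LinearMap.finrank_le_finrank_of_injective hinj) ?_
  rw [Module.finrank_fintype_fun_eq_card, ← Subspace.dual_finrank_eq]
  simpa using hli.fintype_card_le_finrank

lemma Submodule.exists_eq_matrixGraph (Λ : Submodule F (ι ⊕ ι → F))
    (hdim : finrank F Λ = Fintype.card ι) (hvert : ∀ y ∈ Λ, y ∘ Sum.inl = 0 → y = 0) :
    ∃ T : Matrix ι ι F, Λ = matrixGraph T := by
  classical
  let π : Λ →ₗ[F] (ι → F) := LinearMap.funLeft F F Sum.inl ∘ₗ Λ.subtype
  have hπ : Function.Bijective π := by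
    have hinj : Function.Injective π := by
      rw [← LinearMap.ker_eq_bot, LinearMap.ker_eq_bot']
      exact fun y hy => Subtype.ext (hvert y y.2 hy)
    refine ⟨hinj, (LinearMap.injective_iff_surjective_of_finrank_eq_finrank ?_).mp hinj⟩
    rw [hdim, Module.finrank_fintype_fun_eq_card]
  let e := LinearEquiv.ofBijective π hπ
  let T := LinearMap.toMatrix' (LinearMap.funLeft F F Sum.inr ∘ₗ Λ.subtype ∘ₗ e.symm.toLinearMap)
  have hT : ∀ y : Λ, T *ᵥ (y.1 ∘ Sum.inl) = y.1 ∘ Sum.inr := fun y => by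
    rw [LinearMap.toMatrix'_mulVec]
    exact congrArg (fun z : Λ => z.1 ∘ Sum.inr) (e.symm_apply_apply y)
  refine ⟨T, le_antisymm (fun y hy => mem_matrixGraph.2 (hT ⟨y, hy⟩).symm) fun y hy => ?_⟩
  obtain ⟨z, hz⟩ := hπ.2 (y ∘ Sum.inl)
  have hl : z.1 ∘ Sum.inl = y ∘ Sum.inl := hz
  have hr : z.1 ∘ Sum.inr = y ∘ Sum.inr := by rw [← hT z, hl, mem_matrixGraph.1 hy]
  rw [← Sum.elim_comp_inl_inr y, ← hl, ← hr, Sum.elim_comp_inl_inr]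
  exact z.2

end FieldCoords

section CoordProj

variable {R ι : Type*} [CommRing R] [DecidableEq ι]

def coordProj (J : Finset ι) : Matrix ι ι R :=
  diagonal fun j => if j ∈ J then 1 else 0

lemma isSymm_coordProj (J : Finset ι) : (coordProj J : Matrix ι ι R).IsSymm :=
  isSymm_diagonal _

variable [Fintype ι]

lemma coordProj_mulVec_apply (J : Finset ι) (v : ι → R) (j : ι) :
    (coordProj J *ᵥ v) j = if j ∈ J then v j else 0 := by
  simp [coordProj, mulVec_diagonal]

lemma sum_single_neg_one_eq_neg_coordProj (J : Finset ι) :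
    ∑ j ∈ J, single j j (-1 : R) = -coordProj J := by
  rw [coordProj, ← sum_single_eq_diagonal, ← sum_neg_distrib, ← sum_subset (subset_univ J)]
  · exact sum_congr rfl fun j hj => by simp [hj, single_neg]
  · intro j _ hj
    simp [hj]

end CoordProj

section Lagrangian

variable {F ι : Type*} [Field F] [Fintype ι] [DecidableEq ι]

/-- Restriction to the coordinates in `J` identifies `{w | (0, w) ∈ Λ}` with `F^J`. -/
structure IsVerticalCoords (Λ : Submodule F (ι ⊕ ι → F)) (J : Finset ι) : Prop where
  exists_coordProj_eq_single :
    ∀ b ∈ J, ∃ u ∈ Λ, u ∘ Sum.inl = 0 ∧ coordProj J *ᵥ (u ∘ Sum.inr) = Pi.single b 1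
  eq_zero_of_coordProj_eq_zero :
    ∀ y ∈ Λ, y ∘ Sum.inl = 0 → coordProj J *ᵥ (y ∘ Sum.inr) = 0 → y = 0

lemma Submodule.exists_isVerticalCoords (Λ : Submodule F (ι ⊕ ι → F)) :
    ∃ J : Finset ι, IsVerticalCoords Λ J := by
  let V := Λ ⊓ LinearMap.ker (LinearMap.funLeft F F Sum.inl)
  have hf : Function.Injective (LinearMap.funLeft F F Sum.inr ∘ₗ V.subtype) := by
    rw [← LinearMap.ker_eq_bot, LinearMap.ker_eq_bot']
    intro y hr
    have hl : y.1 ∘ Sum.inl = 0 := y.2.2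
    replace hr : y.1 ∘ Sum.inr = 0 := hr
    ext1
    rw [← Sum.elim_comp_inl_inr y.1, hl, hr, Sum.elim_zero_zero]
    rfl
  obtain ⟨J, hinj, hsurj⟩ := exists_finset_bijective_funLeft_comp _ hf
  refine ⟨J, ⟨fun b hb => ?_, fun y hy hl hr => ?_⟩⟩
  · obtain ⟨⟨u, hu, hl⟩, hu'⟩ := hsurj fun j => (Pi.single b 1 : ι → F) j
    refine ⟨u, hu, hl, funext fun j => ?_⟩
    rw [coordProj_mulVec_apply]
    split_ifs with hj
    · exact congrFun hu' ⟨j, hj⟩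
    · exact (Pi.single_eq_of_ne (M := fun _ => F) (ne_of_mem_of_not_mem hb hj).symm _).symm
  · have := @hinj ⟨y, hy, show y ∘ Sum.inl = 0 from hl⟩ 0 (funext fun j => by
      simpa [coordProj_mulVec_apply, j.2] using congrFun hr j)
    exact congrArg Subtype.val this

variable {Λ : Submodule F (ι ⊕ ι → F)} {J : Finset ι}

lemma IsIsotropic.eq_zero_of_mem_map_fromBlocks_coordProj (hiso : IsIsotropic Λ)
    (hJ : IsVerticalCoords Λ J) :
    ∀ y ∈ Λ.map (fromBlocks 1 (coordProj J) 0 1 : Matrix (ι ⊕ ι) (ι ⊕ ι) F).mulVecLin,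
      y ∘ Sum.inl = 0 → y = 0 := by
  rintro _ ⟨x, hx, rfl⟩ h0
  rw [mulVecLin_apply, fromBlocks_upper_mulVec, Sum.elim_comp_inl] at h0
  have hQ : coordProj J *ᵥ (x ∘ Sum.inr) = 0 := by
    funext b
    rw [coordProj_mulVec_apply]
    split_ifs with hb
    · obtain ⟨u, hu, hul, huJ⟩ := hJ.exists_coordProj_eq_single b hb
      -- `ω(u, x) = -x₂ b`, since `u₁ = 0` and `x₁ = -Q_J x₂`
      have h := hiso u hu x hx
      rw [symplecticForm, hul, zero_dotProduct, sub_zero, eq_neg_of_add_eq_zero_left h0,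
        dotProduct_neg, dotProduct_mulVec, ← (isSymm_coordProj J).eq, vecMul_transpose, huJ,
        single_one_dotProduct, neg_eq_zero] at h
      exact h
    · rfl
  have : x = 0 := hJ.eq_zero_of_coordProj_eq_zero x hx (by rwa [hQ, add_zero] at h0) hQ
  simp [this]

lemma IsVerticalCoords.apply_eq_zero_of_map_eq_matrixGraph {T : Matrix ι ι F}
    (hJ : IsVerticalCoords Λ J)
    (hΛ : Λ.map (fromBlocks 1 (coordProj J) 0 1 : Matrix (ι ⊕ ι) (ι ⊕ ι) F).mulVecLin
      = matrixGraph T) :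
    ∀ a ∈ J, ∀ b ∈ J, a ≠ b → T a b = 0 := by
  intro a ha b hb hab
  obtain ⟨u, hu, hul, huJ⟩ := hJ.exists_coordProj_eq_single b hb
  have hmem := hΛ ▸ Submodule.mem_map_of_mem (f := (fromBlocks 1 (coordProj J) 0 1 :
    Matrix (ι ⊕ ι) (ι ⊕ ι) F).mulVecLin) hu
  rw [mem_matrixGraph, mulVecLin_apply, fromBlocks_upper_mulVec, Sum.elim_comp_inl,
    Sum.elim_comp_inr, hul, zero_add, huJ, mulVec_single_one] at hmem
  have := congrFun huJ a
  rw [coordProj_mulVec_apply, if_pos ha, hmem, Pi.single_eq_of_ne hab] at this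
  simpa using this

theorem IsIsotropic.exists_map_fromBlocks_coordProj_eq_matrixGraph (hiso : IsIsotropic Λ)
    (hdim : finrank F Λ = Fintype.card ι) :
    ∃ (J : Finset ι) (T : Matrix ι ι F), T.IsSymm ∧ (∀ a ∈ J, ∀ b ∈ J, a ≠ b → T a b = 0) ∧
      Λ.map (fromBlocks 1 (coordProj J) 0 1 : Matrix (ι ⊕ ι) (ι ⊕ ι) F).mulVecLin
        = matrixGraph T := by
  obtain ⟨J, hJ⟩ := Λ.exists_isVerticalCoords
  set M : Matrix (ι ⊕ ι) (ι ⊕ ι) F := fromBlocks 1 (coordProj J) 0 1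
  have hM : Function.Injective M.mulVecLin :=
    Function.LeftInverse.injective (g := (fromBlocks 1 (-coordProj J) 0 1).mulVecLin)
      fun x => by simp [M, mulVec_mulVec, fromBlocks_upper_neg_mul_self]
  obtain ⟨T, hT⟩ := (Λ.map M.mulVecLin).exists_eq_matrixGraph
    (by rw [← hdim, (Λ.equivMapOfInjective _ hM).finrank_eq])
    (hiso.eq_zero_of_mem_map_fromBlocks_coordProj hJ)
  have hisoT : IsIsotropic (matrixGraph T) := by
    rw [← hT]
    rintro _ ⟨x, hx, rfl⟩ _ ⟨y, hy, rfl⟩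
    rw [mulVecLin_apply, mulVecLin_apply,
      symplecticForm_fromBlocks_upper_mulVec (isSymm_coordProj J)]
    exact hiso x hx y hy
  exact ⟨J, T, hisoT.isSymm_of_matrixGraph, hJ.apply_eq_zero_of_map_eq_matrixGraph hT, hT⟩

end Lagrangian

theorem stmt11_general {F : Type*} [Field F] {n : ℕ}
    (Λ : Submodule F (Fin n ⊕ Fin n → F))
    (hiso : ∀ x ∈ Λ, ∀ y ∈ Λ,
      (∑ j, x (Sum.inr j) * y (Sum.inl j)) - (∑ j, x (Sum.inl j) * y (Sum.inr j)) = 0)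
    (hdim : finrank F Λ = n)
    (hc : Sum.elim (1 : Fin n → F) (0 : Fin n → F) ∈ Λ) :
    ∃ l : List (Matrix (Fin n ⊕ Fin n) (Fin n ⊕ Fin n) F),
      l.length ≤ n * (n - 1) / 2 + 1 ∧
      (∀ M ∈ l, (∃ j t, M = XiD j t) ∨ (∃ i j t, i ≠ j ∧ M = XiOff i j t)) ∧
      Λ = Submodule.map (Matrix.mulVecLin l.prod)
        (LinearMap.ker (LinearMap.funLeft F F (Sum.inr : Fin n → Fin n ⊕ Fin n))) := by
  obtain ⟨J, T, hT, hTJ, hΛ⟩ := IsIsotropic.exists_map_fromBlocks_coordProj_eq_matrixGraph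
    (Λ := Λ) hiso (by rw [hdim, Fintype.card_fin])
  have hrow : T *ᵥ 1 = 0 := by
    have := hΛ ▸ Submodule.mem_map_of_mem (f := (fromBlocks 1 (coordProj J) 0 1 :
      Matrix (Fin n ⊕ Fin n) (Fin n ⊕ Fin n) F).mulVecLin) hc
    simpa [mem_matrixGraph, fromBlocks_upper_mulVec, eq_comm] using this
  let P : Finset (Fin n × Fin n) := {p | p.1 < p.2 ∧ ¬(p.1 ∈ J ∧ p.2 ∈ J)}
  have hD : (J.toList.map fun j => XiD j (-1 : F)).prod = fromBlocks 1 (-coordProj J) 0 1 := by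
    rw [← sum_single_neg_one_eq_neg_coordProj]
    exact prod_toList_map_fromBlocks_upper J fun j => single j j (-1)
  have hOff : (P.toList.map fun p => XiOff p.1 p.2 (-T p.1 p.2)).prod = fromBlocks 1 0 T 1 := by
    refine (prod_toList_map_fromBlocks_lower P
      fun p => (-T p.1 p.2) • edgeLaplacian p.1 p.2).trans ?_
    rw [sum_filter_lt_not_both_mem_smul_edgeLaplacian T hT hrow J hTJ]
  refine ⟨J.toList.map (fun j => XiD j (-1)) ++ P.toList.map fun p => XiOff p.1 p.2 (-T p.1 p.2),
    ?_, ?_, ?_⟩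
  · simpa [P, Nat.choose_two_right] using card_add_card_filter_lt_not_both_mem_le J
  · simp only [List.mem_append, List.mem_map, mem_toList]
    rintro _ (⟨j, -, rfl⟩ | ⟨p, hp, rfl⟩)
    · exact Or.inl ⟨j, -1, rfl⟩
    · exact Or.inr ⟨p.1, p.2, _, (mem_filter.1 hp).2.1.ne, rfl⟩
  · rw [List.prod_append, hD, hOff, mulVecLin_mul, Submodule.map_comp,
      ← matrixGraph_eq_map_fromBlocks, ← hΛ, ← Submodule.map_comp, ← mulVecLin_mul,
      fromBlocks_upper_neg_mul_self, mulVecLin_one, Submodule.map_id]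

/-- Every Lagrangian subspace `Λ` of `F^n × F^n` (realized as `F^{Fin n ⊕ Fin n}`)
containing `c₀ = ((1,…,1),(0,…,0))` can be written as `A₁ ⋯ A_k · (F^n × {0})` where
`k ≤ n(n−1)/2 + 1` and each `A_m` is one of the generators `Ξ_j(t)` or `Ξ_{i,j}(t)`.
(Electrically: every boundary behavior comes from a layerable network with at most
`n(n−1)/2 + 1` edges.) -/
theorem stmt11 {F : Type*} [Field F] {n : ℕ} (hn : 0 < n)
    (Λ : Submodule F (Fin n ⊕ Fin n → F))
    (hiso : ∀ x ∈ Λ, ∀ y ∈ Λ,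
      (∑ j, x (Sum.inr j) * y (Sum.inl j)) - (∑ j, x (Sum.inl j) * y (Sum.inr j)) = 0)
    (hdim : finrank F Λ = n)
    (hc : Sum.elim (1 : Fin n → F) (0 : Fin n → F) ∈ Λ) :
    ∃ l : List (Matrix (Fin n ⊕ Fin n) (Fin n ⊕ Fin n) F),
      l.length ≤ n * (n - 1) / 2 + 1 ∧
      (∀ M ∈ l, (∃ j t, M = XiD j t) ∨ (∃ i j t, i ≠ j ∧ M = XiOff i j t)) ∧
      Λ = Submodule.map (Matrix.mulVecLin l.prod)
        (LinearMap.ker (LinearMap.funLeft F F (Sum.inr : Fin n → Fin n ⊕ Fin n))) :=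
  stmt11_general Λ hiso hdim hc
end

section
/- Let F be a field with more than two elements (F ≠ F₂), let n ≥ 3, and let i, j, k be distinct indices in {1,…,n}. Then for every t ∈ F, the matrix Ξ_{i,k}(t) belongs to the subgroup of GL_{2n}(F) generated by the matrices Ξ_{i,j}(s), Ξ_j(s), and Ξ_{j,k}(s) for s ∈ F. -/
open Module

/-!
Each generator is a transvection `1 + s • v wᵀ` with `wᵀ v = 0`. Conjugating `Ξ_{j,k}(s)` by
`Ξ_{i,j}(a⁻¹) Ξ_j(-a)` gives `1 + s • (u - a p)(u' + a p')ᵀ`, where `1 + t • u u'ᵀ = Ξ_{i,k}(t)`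
and `1 + t • p p'ᵀ = Ξ_j(t)`. All of `u'ᵀu, u'ᵀp, p'ᵀu, p'ᵀp` vanish, so on such matrices
multiplication is addition of the rank-one parts. For distinct nonzero `a, b` (available as
`F ≠ 𝔽₂`) a combination of two conjugates and one `Ξ_j` leaves exactly `t • u u'ᵀ`.
-/

open Matrix

section Transvection

variable {ι R : Type*} [Fintype ι] [DecidableEq ι] [CommRing R]

lemma one_add_mul_one_add_of_mul_eq_zero {X Y : Matrix ι ι R} (h : X * Y = 0) :
    (1 + X) * (1 + Y) = 1 + (X + Y) := by
  rw [add_mul, mul_add, mul_add, h]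
  simp only [one_mul, mul_one, add_zero]
  abel

lemma smul_vecMulVec_mul_smul_vecMulVec_eq_zero {v w v' w' : ι → R} (h : w ⬝ᵥ v' = 0)
    (s t : R) : (s • vecMulVec v w) * (t • vecMulVec v' w') = 0 := by
  simp [vecMulVec_mul_vecMulVec, h]

lemma one_add_smul_vecMulVec_mul_one_add_smul_vecMulVec {v w : ι → R} (h : w ⬝ᵥ v = 0)
    (s t : R) :
    (1 + s • vecMulVec v w) * (1 + t • vecMulVec v w) = 1 + (s + t) • vecMulVec v w := by
  rw [one_add_mul_one_add_of_mul_eq_zero (smul_vecMulVec_mul_smul_vecMulVec_eq_zero h s t),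
    add_smul]

lemma isUnit_one_add_smul_vecMulVec {v w : ι → R} (h : w ⬝ᵥ v = 0) (s : R) :
    IsUnit (1 + s • vecMulVec v w) :=
  ⟨⟨_, 1 + (-s) • vecMulVec v w,
    by rw [one_add_smul_vecMulVec_mul_one_add_smul_vecMulVec h, add_neg_cancel, zero_smul,
      add_zero],
    by rw [one_add_smul_vecMulVec_mul_one_add_smul_vecMulVec h, neg_add_cancel, zero_smul,
      add_zero]⟩, rfl⟩

lemma one_add_smul_vecMulVec_mulVec (v w x : ι → R) (s : R) :
    (1 + s • vecMulVec v w) *ᵥ x = x + (s * (w ⬝ᵥ x)) • v := by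
  simp [add_mulVec, smul_mulVec, vecMulVec_mulVec, mul_smul]

lemma vecMul_one_add_smul_vecMulVec (v w x : ι → R) (s : R) :
    x ᵥ* (1 + s • vecMulVec v w) = x + (s * (x ⬝ᵥ v)) • w := by
  simp [vecMul_add, vecMul_smul, vecMul_vecMulVec, mul_smul]

lemma mul_one_add_smul_vecMulVec_mul {g h : Matrix ι ι R} (hgh : g * h = 1) (v w : ι → R)
    (s : R) : g * (1 + s • vecMulVec v w) * h = 1 + s • vecMulVec (g *ᵥ v) (w ᵥ* h) := by
  rw [mul_add, add_mul, mul_one, hgh, mul_smul_comm, smul_mul_assoc, mul_vecMulVec,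
    vecMulVec_mul]

end Transvection

section Generators

variable {F : Type*} [Field F] {n : ℕ}

local notation "e" b => (Pi.single b (1 : F) : Fin n ⊕ Fin n → F)

lemma XiD_eq_one_add_smul_vecMulVec (j : Fin n) (t : F) :
    XiD j t = 1 + t • vecMulVec (e Sum.inl j) (e Sum.inr j) := by
  ext (p | p) (q | q) <;>
    simp [XiD, vecMulVec_apply, Matrix.single_apply, Pi.single_apply, one_apply]
  aesop

lemma XiOff_eq_one_add_smul_vecMulVec (i j : Fin n) (t : F) :
    XiOff i j t =
      1 + t • vecMulVec ((e Sum.inr i) - e Sum.inr j) ((e Sum.inl i) - e Sum.inl j) := by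
  ext (p | p) (q | q) <;>
    simp [XiOff, vecMulVec_apply, Matrix.single_apply, Pi.single_apply, one_apply]
  grind

lemma isUnit_XiD (j : Fin n) (t : F) : IsUnit (XiD j t) := by
  rw [XiD_eq_one_add_smul_vecMulVec]
  exact isUnit_one_add_smul_vecMulVec (by simp) t

lemma isUnit_XiOff (i j : Fin n) (t : F) : IsUnit (XiOff i j t) := by
  rw [XiOff_eq_one_add_smul_vecMulVec]
  exact isUnit_one_add_smul_vecMulVec (by simp) t

lemma XiD_mul_XiD (j : Fin n) (s t : F) : XiD j s * XiD j t = XiD j (s + t) := by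
  simp only [XiD_eq_one_add_smul_vecMulVec]
  exact one_add_smul_vecMulVec_mul_one_add_smul_vecMulVec (by simp) s t

lemma XiOff_mul_XiOff (i j : Fin n) (s t : F) :
    XiOff i j s * XiOff i j t = XiOff i j (s + t) := by
  simp only [XiOff_eq_one_add_smul_vecMulVec]
  exact one_add_smul_vecMulVec_mul_one_add_smul_vecMulVec (by simp) s t

lemma XiD_zero (j : Fin n) : XiD j (0 : F) = 1 := by
  simp [XiD_eq_one_add_smul_vecMulVec]

lemma XiOff_zero (i j : Fin n) : XiOff i j (0 : F) = 1 := by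
  simp [XiOff_eq_one_add_smul_vecMulVec]

lemma conj_XiOff_eq_one_add_smul_vecMulVec {i j k : Fin n} (hij : i ≠ j) (hjk : j ≠ k)
    {a : F} (ha : a ≠ 0) (s : F) :
    XiOff i j a⁻¹ * XiD j (-a) * XiOff j k s * XiD j a * XiOff i j (-a⁻¹) =
      1 + s • vecMulVec ((e Sum.inr i) - (e Sum.inr k) - a • e Sum.inl j)
        ((e Sum.inl i) - (e Sum.inl k) + a • e Sum.inr j) := by
  have hgh : (XiOff i j a⁻¹ * XiD j (-a)) * (XiD j a * XiOff i j (-a⁻¹)) = 1 := by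
    rw [mul_assoc, ← mul_assoc (XiD j (-a)), XiD_mul_XiD, neg_add_cancel, XiD_zero, one_mul,
      XiOff_mul_XiOff, add_neg_cancel, XiOff_zero]
  rw [mul_assoc _ (XiD j a), XiOff_eq_one_add_smul_vecMulVec j k,
    mul_one_add_smul_vecMulVec_mul hgh, ← mulVec_mulVec, ← vecMul_vecMul]
  simp only [XiD_eq_one_add_smul_vecMulVec, XiOff_eq_one_add_smul_vecMulVec,
    one_add_smul_vecMulVec_mulVec, vecMul_one_add_smul_vecMulVec]
  simp [hij, hjk, hij.symm, hjk.symm, inv_mul_cancel₀ ha]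
  congr 2 <;> abel

lemma XiOff_eq_conj_mul_conj_mul_XiD {i j k : Fin n} (hij : i ≠ j) (hjk : j ≠ k) {a b : F}
    (ha : a ≠ 0) (hb : b ≠ 0) (hab : a ≠ b) (t : F) :
    XiOff i k t =
      (XiOff i j a⁻¹ * XiD j (-a) * XiOff j k (t * b / (b - a)) * XiD j a *
        XiOff i j (-a⁻¹)) *
      (XiOff i j b⁻¹ * XiD j (-b) * XiOff j k (t * a / (a - b)) * XiD j b *
        XiOff i j (-b⁻¹)) *
      XiD j (-(t * a * b)) := by
  rw [conj_XiOff_eq_one_add_smul_vecMulVec hij hjk ha,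
    conj_XiOff_eq_one_add_smul_vecMulVec hij hjk hb, XiD_eq_one_add_smul_vecMulVec,
    one_add_mul_one_add_of_mul_eq_zero, one_add_mul_one_add_of_mul_eq_zero,
    XiOff_eq_one_add_smul_vecMulVec]
  · set u := (e Sum.inr i) - e Sum.inr k
    set u' := (e Sum.inl i) - e Sum.inl k
    set p := e Sum.inl j
    set p' := e Sum.inr j
    congr 1
    simp only [vecMulVec_add, sub_vecMulVec, smul_vecMulVec, vecMulVec_smul]
    have hba : b - a ≠ 0 := sub_ne_zero.2 hab.symm
    have hab' : a - b ≠ 0 := sub_ne_zero.2 hab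
    match_scalars <;> field_simp <;> ring
  · rw [add_mul, smul_vecMulVec_mul_smul_vecMulVec_eq_zero,
      smul_vecMulVec_mul_smul_vecMulVec_eq_zero, add_zero]
    all_goals simp [hij.symm, hjk]
  · rw [smul_vecMulVec_mul_smul_vecMulVec_eq_zero]
    simp [hij, hjk, hij.symm, hjk.symm]

end Generators

theorem stmt12_general {F : Type*} [Field F] {n : ℕ}
    (hF : ∃ x : F, x ≠ 0 ∧ x ≠ 1)
    (i j k : Fin n) (hij : i ≠ j) (hjk : j ≠ k) (t : F) :
    ∃ A ∈ Subgroup.closure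
        {A : (Matrix (Fin n ⊕ Fin n) (Fin n ⊕ Fin n) F)ˣ |
          (∃ s, (A : Matrix (Fin n ⊕ Fin n) (Fin n ⊕ Fin n) F) = XiOff i j s) ∨
          (∃ s, (A : Matrix (Fin n ⊕ Fin n) (Fin n ⊕ Fin n) F) = XiD j s) ∨
          (∃ s, (A : Matrix (Fin n ⊕ Fin n) (Fin n ⊕ Fin n) F) = XiOff j k s)},
      (A : Matrix (Fin n ⊕ Fin n) (Fin n ⊕ Fin n) F) = XiOff i k t := by
  let H : Submonoid (Matrix (Fin n ⊕ Fin n) (Fin n ⊕ Fin n) F) :=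
    (Subgroup.closure {A | (∃ s, A.1 = XiOff i j s) ∨ (∃ s, A.1 = XiD j s) ∨
      ∃ s, A.1 = XiOff j k s}).toSubmonoid.map (Units.coeHom _)
  suffices XiOff i k t ∈ H from this
  have hij_mem (s : F) : XiOff i j s ∈ H :=
    ⟨(isUnit_XiOff i j s).unit, Subgroup.subset_closure (Or.inl ⟨s, rfl⟩), rfl⟩
  have hj_mem (s : F) : XiD j s ∈ H :=
    ⟨(isUnit_XiD j s).unit, Subgroup.subset_closure (Or.inr (Or.inl ⟨s, rfl⟩)), rfl⟩
  have hjk_mem (s : F) : XiOff j k s ∈ H :=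
    ⟨(isUnit_XiOff j k s).unit, Subgroup.subset_closure (Or.inr (Or.inr ⟨s, rfl⟩)), rfl⟩
  have hconj_mem (a s : F) :
      XiOff i j a⁻¹ * XiD j (-a) * XiOff j k s * XiD j a * XiOff i j (-a⁻¹) ∈ H :=
    mul_mem (mul_mem (mul_mem (mul_mem (hij_mem _) (hj_mem _)) (hjk_mem _)) (hj_mem _))
      (hij_mem _)
  obtain ⟨x, hx0, hx1⟩ := hF
  rw [XiOff_eq_conj_mul_conj_mul_XiD hij hjk one_ne_zero hx0 hx1.symm t]
  exact mul_mem (mul_mem (hconj_mem _ _) (hconj_mem _ _)) (hj_mem _)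

/-- For `F ≠ F₂`, `n ≥ 3`, and distinct indices `i, j, k`, the generator `Ξ_{i,k}(t)` lies
in the subgroup of `GL_{2n}(F)` generated by the matrices `Ξ_{i,j}(s)`, `Ξ_j(s)`,
and `Ξ_{j,k}(s)` for `s ∈ F`. -/
theorem stmt12 {F : Type*} [Field F] {n : ℕ} (hn : 3 ≤ n)
    (hF : ∃ x : F, x ≠ 0 ∧ x ≠ 1)
    (i j k : Fin n) (hij : i ≠ j) (hjk : j ≠ k) (hik : i ≠ k) (t : F) :
    ∃ A ∈ Subgroup.closure
        {A : (Matrix (Fin n ⊕ Fin n) (Fin n ⊕ Fin n) F)ˣ |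
          (∃ s, (A : Matrix (Fin n ⊕ Fin n) (Fin n ⊕ Fin n) F) = XiOff i j s) ∨
          (∃ s, (A : Matrix (Fin n ⊕ Fin n) (Fin n ⊕ Fin n) F) = XiD j s) ∨
          (∃ s, (A : Matrix (Fin n ⊕ Fin n) (Fin n ⊕ Fin n) F) = XiOff j k s)},
      (A : Matrix (Fin n ⊕ Fin n) (Fin n ⊕ Fin n) F) = XiOff i k t :=
  stmt12_general hF i j k hij hjk t
end
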